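/- Let F_q be a finite field, m ≥ 1, and 1 ≤ d ≤ m(q-1)+1. Then the dimension of PRM_q(d,m) equals Σ_{i=0}^{m} ρ_q(d−1, i), where ρ_q(ν,i) is the number of tuples (a_1,…,a_i) of integers with 0 ≤ a_j ≤ q−1 and a_1+⋯+a_i ≤ ν (with ρ_q(ν,0) = 1 for ν ≥ 0). -/

import Mathlib

/-- `v` is the standard representative of a point of projective space:
its last nonzero coordinate equals `1`. -/
def IsRep {K : Type} [Field K] {n : ℕ} (v : Fin n → K) : Prop :=
  ∃ i, v i = 1 ∧ ∀ j, i < j → v j = 0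

instance {K : Type} [Field K] [DecidableEq K] {n : ℕ} (v : Fin n → K) :
    Decidable (IsRep v) := by unfold IsRep; infer_instance

/-!
Every homogeneous monomial of degree `d`, as a function on the standard representatives,
coincides with one of the form `X₀^a₀ ⋯ X_{j-1}^a_{j-1} X_j^(d - ∑ a)`, where `X_j` is the last
variable it involves, `a_k ≤ q - 1` and `∑ a ≤ d - 1`: since `x ^ s = x ^ t` on `𝔽_q` whenever
`s, t > 0` and `s ≡ t [MOD q - 1]`, the exponents below `j` can be reduced and the excess moved
onto `X_j`, which keeps a positive exponent. These functions are linearly independent: on the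
representatives `(w, 1, 0, …, 0)` with `w ∈ K^j`, those attached to a larger `j` vanish and those
attached to `j` are reduced monomials in `w`, which are independent functions on `K^j`.
-/

open Finset

@[to_additive]
theorem Fin.prod_univ_eq_prod_castLE {M : Type*} [CommMonoid M] {n j : ℕ} (hj : j ≤ n)
    (f : Fin n → M) (hf : ∀ k : Fin n, j ≤ k → f k = 1) :
    ∏ k, f k = ∏ k : Fin j, f (Fin.castLE hj k) := by
  obtain ⟨l, rfl⟩ := Nat.exists_eq_add_of_le hj
  rw [Fin.prod_univ_add, Fintype.prod_eq_one (fun i => f (Fin.natAdd j i)) fun i => hf _ (by simp),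
    mul_one]
  rfl

@[to_additive]
theorem Fin.prod_univ_eq_prod_castLE_mul {M : Type*} [CommMonoid M] {n : ℕ} (j : Fin n)
    (f : Fin n → M) (hf : ∀ k, j < k → f k = 1) :
    ∏ k, f k = (∏ k : Fin j, f (Fin.castLE j.isLt.le k)) * f j := by
  rw [Fin.prod_univ_eq_prod_castLE j.isLt f hf, Fin.prod_univ_castSucc]
  rfl

theorem Fin.exists_last_ne_zero {M : Type*} [Zero M] {n : ℕ} {f : Fin n → M} (hf : f ≠ 0) :
    ∃ j, f j ≠ 0 ∧ ∀ k, j < k → f k = 0 := by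
  classical
  have hne : (univ.filter (f · ≠ 0)).Nonempty := by
    obtain ⟨k, hk⟩ := Function.ne_iff.mp hf
    exact ⟨k, by simpa using hk⟩
  refine ⟨_, (mem_filter.mp (max'_mem _ hne)).2, fun k hk => ?_⟩
  by_contra h
  exact not_le.mpr hk (le_max' _ k (by simpa using h))

theorem FiniteField.pow_eq_pow_of_modEq {K : Type*} [Field K] [Fintype K] {s t : ℕ}
    (hs : s ≠ 0) (ht : t ≠ 0) (h : s ≡ t [MOD Fintype.card K - 1]) (x : K) : x ^ s = x ^ t := by
  rcases eq_or_ne x 0 with rfl | hx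
  · rw [zero_pow hs, zero_pow ht]
  · have hdvd : orderOf x ∣ Fintype.card K - 1 :=
      orderOf_dvd_of_pow_eq_one (FiniteField.pow_card_sub_one_eq_one x hx)
    rw [← pow_mod_orderOf, h.of_dvd hdvd, pow_mod_orderOf]

theorem linearIndependent_sigma_of_triangular {R M ι : Type*} [Ring R] [AddCommGroup M]
    [Module R M] [LinearOrder ι] [WellFoundedLT ι] [Fintype ι] {κ : ι → Type*}
    [∀ i, Fintype (κ i)] {N : ι → Type*} [∀ i, AddCommGroup (N i)] [∀ i, Module R (N i)]
    (π : ∀ i, M →ₗ[R] N i) (v : (Σ i, κ i) → M)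
    (hv : ∀ i j (k : κ j), i < j → π i (v ⟨j, k⟩) = 0)
    (hind : ∀ i, LinearIndependent R fun k : κ i => π i (v ⟨i, k⟩)) :
    LinearIndependent R v := by
  classical
  rw [Fintype.linearIndependent_iff]
  intro g hg b
  suffices ∀ i (k : κ i), g ⟨i, k⟩ = 0 from this b.1 b.2
  intro i
  induction i using WellFoundedLT.induction with
  | _ i IH =>
    have hi : ∑ j, ∑ k : κ j, g ⟨j, k⟩ • π i (v ⟨j, k⟩) = 0 := by
      simpa [map_sum, Fintype.sum_sigma] using congrArg (π i) hg
    rw [Fintype.sum_eq_single i fun j hj => ?_] at hi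
    · exact Fintype.linearIndependent_iff.mp (hind i) _ hi
    · rcases hj.lt_or_gt with hji | hij
      · exact Fintype.sum_eq_zero _ fun k => by rw [IH j hji k, zero_smul]
      · exact Fintype.sum_eq_zero _ fun k => by rw [hv i j k hij, smul_zero]

open MvPolynomial in
theorem FiniteField.linearIndependent_prod_pow (K : Type) [Field K] [Fintype K] (n : ℕ) :
    LinearIndependent K fun a : Fin n → Fin (Fintype.card K) =>
      fun w : Fin n → K => ∏ k, w k ^ (a k : ℕ) := by
  let expo (a : Fin n → Fin (Fintype.card K)) : Fin n →₀ ℕ :=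
    Finsupp.equivFunOnFinite.symm fun k => a k
  have hexpo : Function.Injective expo := fun a b hab =>
    funext fun k => Fin.val_injective (congrFun (congrArg (⇑) hab) k)
  have hmon : LinearIndependent K fun a => (monomial (expo a) (1 : K)) :=
    (basisMonomials (Fin n) K).linearIndependent.comp expo hexpo
  have hreduced : Submodule.span K (Set.range fun a => monomial (expo a) (1 : K)) ≤
      restrictDegree (Fin n) K (Fintype.card K - 1) := by
    rw [Submodule.span_le]
    rintro _ ⟨a, rfl⟩
    rw [SetLike.mem_coe, mem_restrictDegree]
    intro s hs k
    rw [Finset.mem_singleton.mp (support_monomial_subset hs)]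
    exact Nat.le_sub_one_of_lt (a k).isLt
  have hdisj : Disjoint (Submodule.span K (Set.range fun a => monomial (expo a) (1 : K)))
      (LinearMap.ker (evalₗ K (Fin n))) := by
    rw [Submodule.disjoint_def]
    intro p hp hker
    exact eq_zero_of_eval_eq_zero (Fin n) K p (fun v => congrFun hker v) (hreduced hp)
  have heval : evalₗ K (Fin n) ∘ (fun a => monomial (expo a) (1 : K)) =
      fun a w => ∏ k, w k ^ (a k : ℕ) := by
    funext a w
    simp [expo, eval_monomial, Finsupp.prod_fintype]
  exact heval ▸ hmon.map hdisj

namespace ProjectiveReedMuller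

/-- `0` is kept apart because `x ^ 0 = 1` even at `x = 0`. -/
def reduceExp (r t : ℕ) : ℕ := if t = 0 then 0 else (t - 1) % r + 1

lemma reduceExp_le (r t : ℕ) : reduceExp r t ≤ t := by
  unfold reduceExp
  split_ifs with ht
  · exact Nat.zero_le _
  · have := Nat.mod_le (t - 1) r
    omega

lemma reduceExp_lt_succ {r : ℕ} (hr : 0 < r) (t : ℕ) : reduceExp r t < r + 1 := by
  unfold reduceExp
  split_ifs
  · omega
  · have := Nat.mod_lt (t - 1) hr
    omega

lemma reduceExp_modEq (r t : ℕ) : reduceExp r t ≡ t [MOD r] := by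
  unfold reduceExp
  split_ifs with ht
  · rw [ht]
  · conv_rhs => rw [← Nat.sub_add_cancel (Nat.one_le_iff_ne_zero.mpr ht)]
    exact (Nat.mod_modEq _ _).add_right 1

lemma reduceExp_eq_zero_iff {r t : ℕ} : reduceExp r t = 0 ↔ t = 0 := by
  unfold reduceExp
  split_ifs <;> simp_all

lemma pow_reduceExp {K : Type*} [Field K] [Fintype K] (x : K) (t : ℕ) :
    x ^ reduceExp (Fintype.card K - 1) t = x ^ t := by
  rcases eq_or_ne t 0 with rfl | ht
  · simp [reduceExp]
  · exact FiniteField.pow_eq_pow_of_modEq (mt reduceExp_eq_zero_iff.mp ht) ht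
      (reduceExp_modEq _ _) x

variable {K : Type} [Field K]

def stratumPoint {n : ℕ} (j : Fin n) (w : Fin j → K) : Fin n → K :=
  fun k => if h : k < j then w ⟨k, h⟩ else if k = j then 1 else 0

lemma isRep_stratumPoint {n : ℕ} (j : Fin n) (w : Fin j → K) : IsRep (stratumPoint j w) :=
  ⟨j, by simp [stratumPoint], fun k hk => by simp [stratumPoint, hk.not_gt, hk.ne']⟩

abbrev Index (q n d : ℕ) : Type :=
  Σ j : Fin n, {a : Fin j → Fin q // ∑ k, (a k : ℕ) ≤ d - 1}

namespace Index

variable {q n d : ℕ}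

def exponent (b : Index q n d) : Fin n → ℕ := fun k =>
  if h : k < b.1 then b.2.1 ⟨k, h⟩ else if k = b.1 then d - ∑ i, (b.2.1 i : ℕ) else 0

variable (K) in
def monomialOnReps (b : Index q n d) (p : {v : Fin n → K // IsRep v}) : K :=
  ∏ k, p.1 k ^ b.exponent k

lemma exponent_of_gt (b : Index q n d) {k : Fin n} (hk : b.1 < k) : b.exponent k = 0 := by
  simp [exponent, hk.not_gt, hk.ne']

lemma exponent_self_ne_zero (hd : 1 ≤ d) (b : Index q n d) : b.exponent b.1 ≠ 0 := by
  have := b.2.2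
  simp only [exponent, lt_irrefl, dite_false, if_true]
  omega

lemma sum_exponent (hd : 1 ≤ d) (b : Index q n d) : ∑ k, b.exponent k = d := by
  rw [Fin.sum_univ_eq_sum_castLE_add b.1 _ fun k => b.exponent_of_gt]
  have := b.2.2
  have hlt (k : Fin b.1) : Fin.castLE b.1.isLt.le k < b.1 := k.isLt
  simp only [exponent, hlt, dite_true, lt_irrefl, dite_false, if_true, Fin.val_castLE, Fin.eta]
  omega

lemma prod_stratumPoint_pow_exponent_of_lt (hd : 1 ≤ d) (b : Index q n d) {j : Fin n}
    (hj : j < b.1) (w : Fin j → K) : ∏ k, stratumPoint j w k ^ b.exponent k = 0 := by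
  refine prod_eq_zero (mem_univ b.1) ?_
  simp [stratumPoint, hj.not_gt, hj.ne', b.exponent_self_ne_zero hd]

lemma prod_stratumPoint_pow_exponent (b : Index q n d) (w : Fin b.1 → K) :
    ∏ k, stratumPoint b.1 w k ^ b.exponent k = ∏ k, w k ^ (b.2.1 k : ℕ) := by
  rw [Fin.prod_univ_eq_prod_castLE b.1.isLt.le _ fun k hk => ?_]
  · have hlt (k : Fin b.1) : Fin.castLE b.1.isLt.le k < b.1 := k.isLt
    simp only [stratumPoint, exponent, hlt, dite_true, Fin.val_castLE, Fin.eta]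
  · rcases (Fin.le_iff_val_le_val.mpr hk).eq_or_lt with rfl | hlt
    · simp [stratumPoint]
    · simp [stratumPoint, b.exponent_of_gt hlt]

end Index

theorem linearIndependent_monomialOnReps [Fintype K] {n d : ℕ} (hd : 1 ≤ d) :
    LinearIndependent K (Index.monomialOnReps K : Index (Fintype.card K) n d → _) := by
  refine linearIndependent_sigma_of_triangular
    (fun j : Fin n => LinearMap.funLeft K K fun w : Fin j → K =>
      ⟨stratumPoint j w, isRep_stratumPoint j w⟩)
    _ (fun i j a hij => by ext w; exact Index.prod_stratumPoint_pow_exponent_of_lt hd ⟨j, a⟩ hij w)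
    fun j => ?_
  have hres : (fun (a : {a : Fin j → Fin (Fintype.card K) // ∑ k, (a k : ℕ) ≤ d - 1})
      (w : Fin j → K) => ∏ k, w k ^ (a.1 k : ℕ)) =
      fun a w => ∏ k, stratumPoint j w k ^ Index.exponent ⟨j, a⟩ k := by
    funext a w
    exact (Index.prod_stratumPoint_pow_exponent ⟨j, a⟩ w).symm
  exact hres ▸ (FiniteField.linearIndependent_prod_pow K j).comp Subtype.val Subtype.val_injective

theorem exists_pow_exponent_eq [Fintype K] {n d : ℕ} (hd : 1 ≤ d) (u : Fin n → ℕ)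
    (hu : ∑ k, u k = d) :
    ∃ b : Index (Fintype.card K) n d, ∀ k (x : K), x ^ b.exponent k = x ^ u k := by
  obtain ⟨j, hj, htop⟩ := Fin.exists_last_ne_zero (f := u) fun h => by simp [h] at hu; omega
  have hq : 1 < Fintype.card K := Fintype.one_lt_card
  set r := Fintype.card K - 1
  let a : Fin j → Fin (Fintype.card K) := fun k =>
    ⟨reduceExp r (u (Fin.castLE j.isLt.le k)), by
      have := reduceExp_lt_succ (r := r) (by omega) (u (Fin.castLE j.isLt.le k))
      omega⟩
  have hsplit : ∑ k : Fin j, u (Fin.castLE j.isLt.le k) + u j = d := by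
    rw [← hu, Fin.sum_univ_eq_sum_castLE_add j u htop]
  have hle : ∑ k, (a k : ℕ) ≤ ∑ k : Fin j, u (Fin.castLE j.isLt.le k) :=
    sum_le_sum fun k _ => reduceExp_le _ _
  have hmod : ∑ k, (a k : ℕ) ≡ ∑ k : Fin j, u (Fin.castLE j.isLt.le k) [MOD r] :=
    Nat.ModEq.sum fun k _ => reduceExp_modEq _ _
  refine ⟨⟨j, a, by omega⟩, fun k x => ?_⟩
  rcases lt_trichotomy k j with hkj | rfl | hjk
  · simp only [Index.exponent, hkj, dite_true]
    exact pow_reduceExp x _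
  · simp only [Index.exponent, lt_irrefl, dite_false, if_true]
    refine FiniteField.pow_eq_pow_of_modEq (by omega) hj ?_ x
    refine Nat.ModEq.add_right_cancel' (∑ i, (a i : ℕ)) ?_
    rw [Nat.sub_add_cancel (by omega), ← hsplit, add_comm]
    exact hmod.symm.add_left _
  · rw [Index.exponent_of_gt ⟨j, a, _⟩ hjk, htop k hjk]

variable (K) in
noncomputable def evalOnReps (n : ℕ) :
    MvPolynomial (Fin n) K →ₗ[K] {v : Fin n → K // IsRep v} → K :=
  LinearMap.funLeft K K Subtype.val ∘ₗ MvPolynomial.evalₗ K (Fin n)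

theorem image_evalOnReps_monomial [Fintype K] {n d : ℕ} (hd : 1 ≤ d) :
    evalOnReps K n '' ((fun u => MvPolynomial.monomial u 1) '' {u | u.degree = d}) =
      Set.range (Index.monomialOnReps K : Index (Fintype.card K) n d → _) := by
  ext c
  constructor
  · rintro ⟨_, ⟨u, hu, rfl⟩, rfl⟩
    obtain ⟨b, hb⟩ := exists_pow_exponent_eq (K := K) hd u (by rwa [← Finsupp.degree_eq_sum])
    refine ⟨b, funext fun p => ?_⟩
    simp [evalOnReps, Index.monomialOnReps, MvPolynomial.eval_monomial, Finsupp.prod_fintype, hb]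
  · rintro ⟨b, rfl⟩
    refine ⟨_, ⟨Finsupp.equivFunOnFinite.symm b.exponent, ?_, rfl⟩, funext fun p => ?_⟩
    · simpa [Finsupp.degree_eq_sum] using b.sum_exponent hd
    · simp [evalOnReps, Index.monomialOnReps, MvPolynomial.eval_monomial, Finsupp.prod_fintype]

theorem span_eval_isHomogeneous [Fintype K] {n d : ℕ} (hd : 1 ≤ d) :
    Submodule.span K {c : {v : Fin n → K // IsRep v} → K |
      ∃ F : MvPolynomial (Fin n) K, F.IsHomogeneous d ∧ c = fun p => MvPolynomial.eval p.1 F} =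
      Submodule.span K
        (Set.range (Index.monomialOnReps K : Index (Fintype.card K) n d → _)) := by
  have hset : {c : {v : Fin n → K // IsRep v} → K |
      ∃ F : MvPolynomial (Fin n) K, F.IsHomogeneous d ∧ c = fun p => MvPolynomial.eval p.1 F} =
      evalOnReps K n '' MvPolynomial.homogeneousSubmodule (Fin n) K d := by
    ext c
    simp only [Set.mem_ofPred_eq, Set.mem_image, SetLike.mem_coe,
      MvPolynomial.mem_homogeneousSubmodule]
    exact exists_congr fun F => and_congr_right fun _ => eq_comm
  rw [hset, Submodule.span_image, Submodule.span_eq,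
    MvPolynomial.homogeneousSubmodule_eq_finsupp_supported,
    AddMonoidAlgebra.supported_eq_span_single, Submodule.map_span, ← image_evalOnReps_monomial hd]
  rfl

end ProjectiveReedMuller

theorem PRM_dimension_general (K : Type) [Field K] [Fintype K]
    (q : ℕ) (hq : Fintype.card K = q) (m d : ℕ)
    (hd1 : 1 ≤ d) :
    Module.finrank K
      ↥(Submodule.span K {c : {v : Fin (m + 1) → K // IsRep v} → K |
          ∃ F : MvPolynomial (Fin (m + 1)) K, F.IsHomogeneous d ∧
            c = fun p => MvPolynomial.eval p.1 F})
      = ∑ i ∈ Finset.range (m + 1),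
          (Finset.univ.filter
            (fun a : Fin i → Fin q => ∑ j, (a j : ℕ) ≤ d - 1)).card := by
  subst hq
  rw [ProjectiveReedMuller.span_eval_isHomogeneous hd1,
    finrank_span_eq_card (ProjectiveReedMuller.linearIndependent_monomialOnReps hd1),
    Fintype.card_sigma, ← Fin.sum_univ_eq_sum_range]
  simp only [Fintype.card_subtype]

/-- The dimension of `PRM_q(d,m)` equals `Σ_{i=0}^{m} ρ_q(d−1, i)`, where
`ρ_q(ν,i)` is the number of tuples `(a_1,…,a_i)` with `0 ≤ a_j ≤ q−1` and sum `≤ ν`. -/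
theorem PRM_dimension (K : Type) [Field K] [Fintype K] [DecidableEq K]
    (q : ℕ) (hq : Fintype.card K = q) (m d : ℕ) (hm : 1 ≤ m)
    (hd1 : 1 ≤ d) (hd2 : d ≤ m * (q - 1) + 1) :
    Module.finrank K
      ↥(Submodule.span K {c : {v : Fin (m + 1) → K // IsRep v} → K |
          ∃ F : MvPolynomial (Fin (m + 1)) K, F.IsHomogeneous d ∧
            c = fun p => MvPolynomial.eval p.1 F})
      = ∑ i ∈ Finset.range (m + 1),
          (Finset.univ.filter
            (fun a : Fin i → Fin q => ∑ j, (a j : ℕ) ≤ d - 1)).card :=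
  PRM_dimension_general K q hq m d hd1
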